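/- arXiv:2011.03358 — 4 statements merged into one kernel-verified Lean document; each statement's English description precedes it below -/
import Mathlib

section
/- Let ΔX, ΔG ∈ ℝ^{d×m} both have full column rank m ≤ d. There exists a symmetric matrix H ∈ ℝ^{d×d} satisfying H ΔG = ΔX if and only if ΔXᵀΔG is a symmetric matrix. -/
/-!
If `H` is symmetric then `(H G)ᵀ G = Gᵀ H G` is symmetric. Conversely, when `Gᵀ G` is invertible,
`B = G (Gᵀ G)⁻¹` satisfies `Bᵀ G = 1`, so `H = X Bᵀ + B Xᵀ - B (Xᵀ G) Bᵀ` satisfies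
`H G = X + B Xᵀ G - B Xᵀ G = X`; the first two terms are transposes of each other and the last
is a congruence of `Xᵀ G`, so `H` is symmetric as soon as `Xᵀ G` is. Full column rank of `G`
makes `Gᵀ G` invertible, since over an ordered field `Gᵀ G` has the rank of `G`.
-/

open Matrix

namespace Matrix

theorem isUnit_of_rank_eq_card {n K : Type*} [Fintype n] [DecidableEq n] [Field K]
    {A : Matrix n n K} (hA : A.rank = Fintype.card n) : IsUnit A := by
  rw [← mulVec_surjective_iff_isUnit, ← coe_mulVecLin, ← LinearMap.range_eq_top]
  apply Submodule.eq_top_of_finrank_eq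
  simpa [rank] using hA

theorem isUnit_transpose_mul_self_of_rank_eq_card {n m K : Type*} [Fintype n] [Fintype m]
    [DecidableEq m] [Field K] [LinearOrder K] [IsStrictOrderedRing K] {G : Matrix n m K}
    (hG : G.rank = Fintype.card m) : IsUnit (Gᵀ * G) :=
  isUnit_of_rank_eq_card (by rw [rank_transpose_mul_self, hG])

section SymmetricSecant

variable {n m R : Type*} [CommRing R]

theorem isSymm_transpose_mul_of_isSymm [Fintype n] {H : Matrix n n R} (hH : H.IsSymm)
    (G : Matrix n m R) : ((H * G)ᵀ * G).IsSymm := by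
  simp only [IsSymm, transpose_mul, transpose_transpose, hH.eq, Matrix.mul_assoc]

theorem IsSymm.mul_mul_transpose [Fintype m] {S : Matrix m m R} (hS : S.IsSymm)
    (B : Matrix n m R) : (B * S * Bᵀ).IsSymm := by
  simp only [IsSymm, transpose_mul, transpose_transpose, hS.eq, Matrix.mul_assoc]

variable [Fintype n] [Fintype m] [DecidableEq m]

noncomputable def symmetricSecantSolution (G X : Matrix n m R) : Matrix n n R :=
  let B := G * (Gᵀ * G)⁻¹
  X * Bᵀ + B * Xᵀ - B * (Xᵀ * G) * Bᵀ

theorem isSymm_symmetricSecantSolution {G X : Matrix n m R} (hXG : (Xᵀ * G).IsSymm) :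
    (symmetricSecantSolution G X).IsSymm := by
  refine IsSymm.sub ?_ (hXG.mul_mul_transpose _)
  simpa only [transpose_mul, transpose_transpose] using
    isSymm_add_transpose_self (X * (G * (Gᵀ * G)⁻¹)ᵀ)

theorem symmetricSecantSolution_mul {G X : Matrix n m R} (hG : IsUnit (Gᵀ * G)) :
    symmetricSecantSolution G X * G = X := by
  have hK : ((Gᵀ * G)⁻¹).IsSymm :=
    IsSymm.inv (by simp only [IsSymm, transpose_mul, transpose_transpose])
  have hB : (G * (Gᵀ * G)⁻¹)ᵀ * G = 1 := by
    rw [transpose_mul, hK.eq, Matrix.mul_assoc,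
      nonsing_inv_mul _ ((isUnit_iff_isUnit_det _).mp hG)]
  simp only [symmetricSecantSolution, Matrix.sub_mul, Matrix.add_mul, Matrix.mul_assoc, hB,
    Matrix.mul_one]
  abel

theorem exists_isSymm_mul_eq_iff {G X : Matrix n m R} (hG : IsUnit (Gᵀ * G)) :
    (∃ H : Matrix n n R, H.IsSymm ∧ H * G = X) ↔ (Xᵀ * G).IsSymm := by
  constructor
  · rintro ⟨H, hH, rfl⟩
    exact isSymm_transpose_mul_of_isSymm hH G
  · intro hXG
    exact ⟨_, isSymm_symmetricSecantSolution hXG, symmetricSecantSolution_mul hG⟩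

end SymmetricSecant

end Matrix

theorem symmetric_multisecant_solvability_iff_general (d m : ℕ)
    (ΔX ΔG : Matrix (Fin d) (Fin m) ℝ)
    (hG : ΔG.rank = m) :
    (∃ H : Matrix (Fin d) (Fin d) ℝ, H.IsSymm ∧ H * ΔG = ΔX) ↔
      (ΔXᵀ * ΔG).IsSymm :=
  exists_isSymm_mul_eq_iff
    (isUnit_transpose_mul_self_of_rank_eq_card (by rw [hG, Fintype.card_fin]))

theorem symmetric_multisecant_solvability_iff (d m : ℕ) (hm : m ≤ d)
    (ΔX ΔG : Matrix (Fin d) (Fin m) ℝ)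
    (hX : ΔX.rank = m) (hG : ΔG.rank = m) :
    (∃ H : Matrix (Fin d) (Fin d) ℝ, H.IsSymm ∧ H * ΔG = ΔX) ↔
      (ΔXᵀ * ΔG).IsSymm :=
  symmetric_multisecant_solvability_iff_general d m ΔX ΔG hG
end

section
/- Let A, D ∈ ℝ^{d×m}, m ≤ d, λ > 0, and Z_ref ∈ ℝ^{d×d} symmetric. The unique minimizer over symmetric matrices Z of ‖ZA − D‖_F² + (λ/2)‖Z − Z_ref‖_F² is given by Z⋆ = V₁Z₁V₁ᵀ + V₁Z₂ + Z₂ᵀV₁ᵀ + (I−P)Z_ref(I−P), where Aᵀ = UΣV₁ᵀ is an economic SVD, P = V₁V₁ᵀ, Z₁ = S ⊙ [V₁ᵀ(ADᵀ + DAᵀ + λZ_ref)V₁] with S_{ij} = 1/(σ_i² + σ_j² + λ), and Z₂ = (Σ² + λI)⁻¹V₁ᵀ(ADᵀ + λZ_ref)(I−P). -/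
/-!
Expanding `f Z = ‖Z A - D‖² + (λ/2) ‖Z - Zref‖²` at `Zs + H`, the first-order term is
`tr (G Hᵀ)` with `G = 2 (Zs A - D) Aᵀ + λ (Zs - Zref)`. For symmetric `H` only the symmetric part
of `G` matters, and it vanishes exactly when `Zs` solves the Lyapunov equation
`Zs (A Aᵀ) + (A Aᵀ) Zs + λ Zs = C`, `C = A Dᵀ + D Aᵀ + λ Zref`. The remainder
`‖H A‖² + (λ/2) ‖H‖²` is positive for `H ≠ 0`, giving minimality and uniqueness.

Since `A Aᵀ = V₁ Σ² V₁ᵀ`, the Lyapunov equation decouples along `range V₁ ⊕ (range V₁)ᗮ`: the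
`V₁`-block is the diagonal Sylvester equation `Σ² Z₁ + Z₁ Σ² + λ Z₁ = V₁ᵀ C V₁`, solved entrywise
by `S ⊙ ·`; the mixed block is `(Σ² + λ) Z₂ = V₁ᵀ C (I - P)`; on the complement `A Aᵀ` vanishes
and the equation reads `λ Z = (I - P) C (I - P)`. Since `(I - P) A = 0`, these last two blocks
of `C` only see `A Dᵀ + λ Zref`, which is why `Z₂` and the final term of `Zs` are written with it.
-/

open Matrix

def frobSq {m n : Type*} [Fintype m] [Fintype n] (A : Matrix m n ℝ) : ℝ :=
  ∑ i, ∑ j, (A i j) ^ 2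

namespace RegularizedProcrustes

section Frobenius

variable {m n : Type*} [Fintype m] [Fintype n]

lemma frobSq_eq_trace (X : Matrix m n ℝ) : frobSq X = (X * Xᵀ).trace := by
  simp [frobSq, trace, mul_apply, sq]

lemma frobSq_nonneg (X : Matrix m n ℝ) : 0 ≤ frobSq X := by
  unfold frobSq; positivity

lemma frobSq_eq_zero_iff {X : Matrix m n ℝ} : frobSq X = 0 ↔ X = 0 := by
  rw [frobSq_eq_trace, ← conjTranspose_eq_transpose_of_trivial,
    trace_mul_conjTranspose_self_eq_zero_iff]

lemma frobSq_add (X Y : Matrix m n ℝ) :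
    frobSq (X + Y) = frobSq X + 2 * (X * Yᵀ).trace + frobSq Y := by
  have hYX : (Y * Xᵀ).trace = (X * Yᵀ).trace := by
    rw [← trace_transpose, transpose_mul, transpose_transpose]
  simp only [frobSq_eq_trace, transpose_add, Matrix.add_mul, Matrix.mul_add, trace_add, hYX]
  ring

end Frobenius

def stationaryRhs {n k : Type*} [Fintype k] (A D : Matrix n k ℝ) (c : ℝ) (R : Matrix n n ℝ) :
    Matrix n n ℝ :=
  A * Dᵀ + D * Aᵀ + c • R

lemma isSymm_stationaryRhs {n k : Type*} [Fintype k] (A D : Matrix n k ℝ) (c : ℝ)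
    {R : Matrix n n ℝ} (hR : R.IsSymm) : (stationaryRhs A D c R).IsSymm := by
  simpa only [stationaryRhs, transpose_mul, transpose_transpose, add_comm (D * Aᵀ)] using
    (isSymm_add_transpose_self (A * Dᵀ)).add (hR.smul c)

section Objective

variable {n k : Type*} [Fintype n] [Fintype k]

noncomputable def objective (A D : Matrix n k ℝ) (lam : ℝ) (Zref Z : Matrix n n ℝ) : ℝ :=
  frobSq (Z * A - D) + lam / 2 * frobSq (Z - Zref)

def lyapunovMap (B : Matrix n n ℝ) (c : ℝ) : Matrix n n ℝ →ₗ[ℝ] Matrix n n ℝ :=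
  LinearMap.mulRight ℝ B + LinearMap.mulLeft ℝ B + c • LinearMap.id

lemma lyapunovMap_apply (B : Matrix n n ℝ) (c : ℝ) (Z : Matrix n n ℝ) :
    lyapunovMap B c Z = Z * B + B * Z + c • Z :=
  rfl

lemma objective_add (A D : Matrix n k ℝ) (lam : ℝ) (Zref Z H : Matrix n n ℝ) :
    objective A D lam Zref (Z + H) = objective A D lam Zref Z
      + (((2 : ℝ) • ((Z * A - D) * Aᵀ) + lam • (Z - Zref)) * Hᵀ).trace
      + frobSq (H * A) + lam / 2 * frobSq H := by
  have h₁ : (Z + H) * A - D = (Z * A - D) + H * A := by rw [Matrix.add_mul]; abel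
  have h₂ : Z + H - Zref = (Z - Zref) + H := by abel
  have h₃ : (Z * A - D) * (H * A)ᵀ = (Z * A - D) * Aᵀ * Hᵀ := by
    rw [transpose_mul, Matrix.mul_assoc]
  rw [objective, objective, h₁, h₂, frobSq_add, frobSq_add, h₃]
  simp only [Matrix.add_mul, trace_add, smul_mul, trace_smul, smul_eq_mul]
  ring

lemma trace_mul_eq_zero_of_skew_of_isSymm {G H : Matrix n n ℝ} (hG : G + Gᵀ = 0)
    (hH : H.IsSymm) : (G * H).trace = 0 := by
  have h : (Gᵀ * H).trace = (G * H).trace := by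
    rw [← trace_transpose, transpose_mul, transpose_transpose, hH.eq, trace_mul_comm]
  have h0 : ((G + Gᵀ) * H).trace = 0 := by rw [hG, Matrix.zero_mul, trace_zero]
  rw [Matrix.add_mul, trace_add, h] at h0
  linarith

variable {A D : Matrix n k ℝ} {lam : ℝ} {Zref Zs : Matrix n n ℝ}

lemma objective_add_of_stationary (hZref : Zref.IsSymm) (hZs : Zs.IsSymm)
    (hstat : lyapunovMap (A * Aᵀ) lam Zs = stationaryRhs A D lam Zref)
    {H : Matrix n n ℝ} (hH : H.IsSymm) :
    objective A D lam Zref (Zs + H) =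
      objective A D lam Zref Zs + frobSq (H * A) + lam / 2 * frobSq H := by
  set G : Matrix n n ℝ := (2 : ℝ) • ((Zs * A - D) * Aᵀ) + lam • (Zs - Zref) with hG
  have hskew : G + Gᵀ = 0 := by
    have h : G + Gᵀ = (2 : ℝ) • (lyapunovMap (A * Aᵀ) lam Zs - stationaryRhs A D lam Zref) := by
      simp only [hG, lyapunovMap_apply, stationaryRhs, transpose_add, transpose_smul,
        transpose_mul, transpose_sub, transpose_transpose, hZs.eq, hZref.eq, Matrix.sub_mul,
        Matrix.mul_assoc]
      module
    rw [h, hstat, sub_self, smul_zero]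
  rw [objective_add, ← hG, hH.eq, trace_mul_eq_zero_of_skew_of_isSymm hskew hH, add_zero]

lemma objective_le_of_stationary (hlam : 0 ≤ lam) (hZref : Zref.IsSymm) (hZs : Zs.IsSymm)
    (hstat : lyapunovMap (A * Aᵀ) lam Zs = stationaryRhs A D lam Zref)
    {Z : Matrix n n ℝ} (hZ : Z.IsSymm) :
    objective A D lam Zref Zs ≤ objective A D lam Zref Z := by
  have hH : (Z - Zs).IsSymm := hZ.sub hZs
  rw [← add_sub_cancel Zs Z, objective_add_of_stationary hZref hZs hstat hH]
  have := frobSq_nonneg ((Z - Zs) * A)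
  have := frobSq_nonneg (Z - Zs)
  nlinarith

lemma eq_of_objective_eq_of_stationary (hlam : 0 < lam) (hZref : Zref.IsSymm)
    (hZs : Zs.IsSymm) (hstat : lyapunovMap (A * Aᵀ) lam Zs = stationaryRhs A D lam Zref)
    {Z : Matrix n n ℝ} (hZ : Z.IsSymm)
    (h : objective A D lam Zref Z = objective A D lam Zref Zs) : Z = Zs := by
  rw [← add_sub_cancel Zs Z, objective_add_of_stationary hZref hZs hstat (hZ.sub hZs)] at h
  have h₁ := frobSq_nonneg ((Z - Zs) * A)
  have h₂ := frobSq_nonneg (Z - Zs)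
  have h₀ : frobSq (Z - Zs) = 0 := by nlinarith
  exact sub_eq_zero.mp (frobSq_eq_zero_iff.mp h₀)

end Objective

section Lyapunov

variable {n k : Type*}

lemma _root_.Matrix.IsSymm.diagonal_solve {M : Matrix k k ℝ} (hM : M.IsSymm) (s : k → ℝ)
    (c : ℝ) :
    (of fun i j => 1 / (s i + s j + c) * M i j).IsSymm :=
  IsSymm.ext fun i j => by rw [of_apply, of_apply, hM.apply, add_comm (s j)]

variable [Fintype k]

lemma _root_.Matrix.IsSymm.mul_mul_transpose_s6 {X : Matrix k k ℝ} (hX : X.IsSymm)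
    (V : Matrix n k ℝ) :
    (V * X * Vᵀ).IsSymm := by
  rw [IsSymm, transpose_mul, transpose_mul, transpose_transpose, hX.eq, Matrix.mul_assoc]

lemma isSymm_one_sub_mul_transpose [DecidableEq n] (V : Matrix n k ℝ) :
    (1 - V * Vᵀ).IsSymm := by
  rw [IsSymm, transpose_sub, transpose_one, transpose_mul, transpose_transpose]

lemma lyapunovMap_diagonal_apply [DecidableEq k] (s : k → ℝ) (c : ℝ) (X : Matrix k k ℝ)
    (i j : k) : lyapunovMap (diagonal s) c X i j = (s i + s j + c) * X i j := by
  simp only [lyapunovMap_apply, Matrix.add_apply, Matrix.smul_apply, mul_diagonal, diagonal_mul,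
    smul_eq_mul]
  ring

lemma lyapunovMap_diagonal_solve [DecidableEq k] {s : k → ℝ} {c : ℝ}
    (hs : ∀ i j, s i + s j + c ≠ 0) (M : Matrix k k ℝ) :
    lyapunovMap (diagonal s) c (of fun i j => 1 / (s i + s j + c) * M i j) = M := by
  ext i j
  rw [lyapunovMap_diagonal_apply, of_apply, ← mul_assoc, mul_one_div_cancel (hs i j), one_mul]

variable [Fintype n]

lemma lyapunovMap_transpose {B : Matrix n n ℝ} (hB : B.IsSymm) (c : ℝ) (Z : Matrix n n ℝ) :
    lyapunovMap B c Zᵀ = (lyapunovMap B c Z)ᵀ := by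
  simp only [lyapunovMap_apply, transpose_add, transpose_smul, transpose_mul, hB.eq]
  abel

lemma isSymm_blockSum [DecidableEq n] (V : Matrix n k ℝ) {Z₁ : Matrix k k ℝ}
    (hZ₁ : Z₁.IsSymm) (Z₂ : Matrix k n ℝ) {R : Matrix n n ℝ} (hR : R.IsSymm) :
    (V * Z₁ * Vᵀ + V * Z₂ + Z₂ᵀ * Vᵀ + (1 - V * Vᵀ) * R * (1 - V * Vᵀ)).IsSymm := by
  have hmix : (V * Z₂ + Z₂ᵀ * Vᵀ).IsSymm := by
    simpa only [transpose_mul] using isSymm_add_transpose_self (V * Z₂)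
  have hcompl := hR.mul_mul_transpose_s6 (1 - V * Vᵀ)
  rw [(isSymm_one_sub_mul_transpose V).eq] at hcompl
  rw [add_assoc (V * Z₁ * Vᵀ)]
  exact ((hZ₁.mul_mul_transpose_s6 V).add hmix).add hcompl

variable [DecidableEq k] {V : Matrix n k ℝ}

lemma lyapunovMap_conj (hV : Vᵀ * V = 1) (E : Matrix k k ℝ) (c : ℝ) (X : Matrix k k ℝ) :
    lyapunovMap (V * E * Vᵀ) c (V * X * Vᵀ) = V * lyapunovMap E c X * Vᵀ := by
  have hV' : ∀ Y : Matrix k n ℝ, Vᵀ * (V * Y) = Y := fun Y => by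
    rw [← Matrix.mul_assoc, hV, Matrix.one_mul]
  simp only [lyapunovMap_apply, Matrix.add_mul, Matrix.mul_add, Matrix.smul_mul,
    Matrix.mul_smul, Matrix.mul_assoc, hV']

lemma lyapunovMap_mul_of_mul_eq_zero (hV : Vᵀ * V = 1) (E : Matrix k k ℝ) (c : ℝ)
    {Y : Matrix k n ℝ} (hY : Y * V = 0) :
    lyapunovMap (V * E * Vᵀ) c (V * Y) = V * ((E + c • 1) * Y) := by
  have hYV : V * Y * (V * E * Vᵀ) = 0 := by
    rw [Matrix.mul_assoc, ← Matrix.mul_assoc Y, ← Matrix.mul_assoc Y, hY, Matrix.zero_mul,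
      Matrix.zero_mul, Matrix.mul_zero]
  have hVV : V * E * Vᵀ * (V * Y) = V * (E * Y) := by
    rw [Matrix.mul_assoc, Matrix.mul_assoc, ← Matrix.mul_assoc Vᵀ, hV, Matrix.one_mul]
  rw [lyapunovMap_apply, hYV, hVV, zero_add, Matrix.add_mul, Matrix.mul_add, smul_mul,
    Matrix.one_mul, Matrix.mul_smul]

variable [DecidableEq n]

lemma one_sub_mul_transpose_mul_self (hV : Vᵀ * V = 1) : (1 - V * Vᵀ) * V = 0 := by
  rw [Matrix.sub_mul, Matrix.one_mul, Matrix.mul_assoc, hV, Matrix.mul_one, sub_self]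

lemma transpose_mul_one_sub_mul_transpose (hV : Vᵀ * V = 1) : Vᵀ * (1 - V * Vᵀ) = 0 := by
  rw [Matrix.mul_sub, Matrix.mul_one, ← Matrix.mul_assoc, hV, Matrix.one_mul, sub_self]

lemma lyapunovMap_compl (hV : Vᵀ * V = 1) (E : Matrix k k ℝ) (c : ℝ) (R : Matrix n n ℝ) :
    lyapunovMap (V * E * Vᵀ) c ((1 - V * Vᵀ) * R * (1 - V * Vᵀ)) =
      c • ((1 - V * Vᵀ) * R * (1 - V * Vᵀ)) := by
  have hright : (1 - V * Vᵀ) * R * (1 - V * Vᵀ) * (V * E * Vᵀ) = 0 := by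
    simp only [Matrix.mul_assoc, ← Matrix.mul_assoc (1 - V * Vᵀ) V,
      one_sub_mul_transpose_mul_self hV, Matrix.zero_mul, Matrix.mul_zero]
  have hleft : V * E * Vᵀ * ((1 - V * Vᵀ) * R * (1 - V * Vᵀ)) = 0 := by
    simp only [Matrix.mul_assoc, ← Matrix.mul_assoc Vᵀ (1 - V * Vᵀ),
      transpose_mul_one_sub_mul_transpose hV, Matrix.zero_mul, Matrix.mul_zero]
  rw [lyapunovMap_apply, hright, hleft, zero_add, zero_add]

lemma lyapunovMap_blockSum (hV : Vᵀ * V = 1) {E : Matrix k k ℝ} (hE : E.IsSymm) {c : ℝ}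
    {C : Matrix n n ℝ} (hC : C.IsSymm) {Z₁ : Matrix k k ℝ} {Z₂ : Matrix k n ℝ}
    {R : Matrix n n ℝ} (h₁ : lyapunovMap E c Z₁ = Vᵀ * C * V)
    (h₂ : (E + c • 1) * Z₂ = Vᵀ * C * (1 - V * Vᵀ)) (hZ₂ : Z₂ * V = 0)
    (hR : c • ((1 - V * Vᵀ) * R * (1 - V * Vᵀ)) = (1 - V * Vᵀ) * C * (1 - V * Vᵀ)) :
    lyapunovMap (V * E * Vᵀ) c
      (V * Z₁ * Vᵀ + V * Z₂ + Z₂ᵀ * Vᵀ + (1 - V * Vᵀ) * R * (1 - V * Vᵀ)) = C := by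
  set P := V * Vᵀ with hP
  have hQ : (1 - P)ᵀ = 1 - P := (isSymm_one_sub_mul_transpose V).eq
  have hPP : V * lyapunovMap E c Z₁ * Vᵀ = P * C * P := by
    rw [h₁, hP]; simp only [Matrix.mul_assoc]
  have hPQ : lyapunovMap (V * E * Vᵀ) c (V * Z₂) = P * C * (1 - P) := by
    rw [lyapunovMap_mul_of_mul_eq_zero hV E c hZ₂, h₂, hP]; simp only [Matrix.mul_assoc]
  have hQP : lyapunovMap (V * E * Vᵀ) c (Z₂ᵀ * Vᵀ) = (1 - P) * C * P := by
    rw [← transpose_mul, lyapunovMap_transpose (hE.mul_mul_transpose_s6 V), hPQ, transpose_mul,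
      transpose_mul, hQ, hC.eq, hP, transpose_mul, transpose_transpose, Matrix.mul_assoc]
  rw [map_add, map_add, map_add, lyapunovMap_conj hV, hPP, hPQ, hQP, lyapunovMap_compl hV, hR]
  calc P * C * P + P * C * (1 - P) + (1 - P) * C * P + (1 - P) * C * (1 - P)
      = (P + (1 - P)) * C * (P + (1 - P)) := by
        simp only [Matrix.add_mul, Matrix.mul_add]; abel
    _ = C := by rw [add_sub_cancel, Matrix.one_mul, Matrix.mul_one]

end Lyapunov

section SVD

variable {n k : Type*} [Fintype k] [DecidableEq k]
  {A : Matrix n k ℝ} {U : Matrix k k ℝ} {σ : k → ℝ} {V : Matrix n k ℝ}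

lemma mul_transpose_eq_of_transpose_eq_svd (hU : Uᵀ * U = 1)
    (hA : Aᵀ = U * diagonal σ * Vᵀ) : A * Aᵀ = V * diagonal (fun i => σ i ^ 2) * Vᵀ := by
  have hA' : A = V * diagonal σ * Uᵀ := by
    rw [← transpose_transpose A, hA, transpose_mul, transpose_mul, transpose_transpose,
      diagonal_transpose, Matrix.mul_assoc]
  rw [hA, hA', Matrix.mul_assoc, ← Matrix.mul_assoc Uᵀ, ← Matrix.mul_assoc Uᵀ, hU,
    Matrix.one_mul, ← Matrix.mul_assoc, Matrix.mul_assoc V, diagonal_mul_diagonal]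
  simp only [sq]

lemma one_sub_mul_eq_zero_of_transpose_eq_svd [Fintype n] [DecidableEq n] (hV : Vᵀ * V = 1)
    (hA : Aᵀ = U * diagonal σ * Vᵀ) : (1 - V * Vᵀ) * A = 0 := by
  rw [← transpose_transpose A, hA, transpose_mul, ← Matrix.mul_assoc,
    transpose_transpose, one_sub_mul_transpose_mul_self hV, Matrix.zero_mul]

end SVD

section Rhs

variable {n k l : Type*} [Fintype n] [Fintype k] {A : Matrix n k ℝ} {Q : Matrix n n ℝ}

lemma mul_stationaryRhs_mul_of_mul_eq_zero (hQ : Q.IsSymm) (hQA : Q * A = 0)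
    (M : Matrix l n ℝ) (D : Matrix n k ℝ) (c : ℝ) (R : Matrix n n ℝ) :
    M * stationaryRhs A D c R * Q = M * (A * Dᵀ + c • R) * Q := by
  have hAQ : Aᵀ * Q = 0 := by rw [← hQ.eq, ← transpose_mul, hQA, transpose_zero]
  simp only [stationaryRhs, Matrix.mul_add, Matrix.add_mul, Matrix.mul_assoc, hAQ,
    Matrix.mul_zero, add_zero]

lemma mul_stationaryRhs_mul_self_of_mul_eq_zero (hQ : Q.IsSymm) (hQA : Q * A = 0)
    (D : Matrix n k ℝ) (c : ℝ) (R : Matrix n n ℝ) :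
    Q * stationaryRhs A D c R * Q = c • (Q * R * Q) := by
  rw [mul_stationaryRhs_mul_of_mul_eq_zero hQ hQA, Matrix.mul_add, Matrix.add_mul,
    ← Matrix.mul_assoc, hQA, Matrix.zero_mul, Matrix.zero_mul, zero_add, Matrix.mul_smul,
    Matrix.smul_mul]

end Rhs

lemma isUnit_det_diagonal_add_smul_one {k : Type*} [Fintype k] [DecidableEq k] {s : k → ℝ}
    {c : ℝ} (h : ∀ i, s i + c ≠ 0) : IsUnit (diagonal s + c • (1 : Matrix k k ℝ)).det := by
  rw [smul_one_eq_diagonal, diagonal_add, det_diagonal, isUnit_iff_ne_zero]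
  exact Finset.prod_ne_zero_iff.mpr fun i _ => h i

end RegularizedProcrustes

open RegularizedProcrustes in
theorem regularized_symmetric_procrustes_solution_general (d m : ℕ)
    (A D : Matrix (Fin d) (Fin m) ℝ)
    (lam : ℝ) (hlam : 0 < lam)
    (Zref : Matrix (Fin d) (Fin d) ℝ) (hZref : Zref.IsSymm)
    -- economic SVD of Aᵀ : `Aᵀ = U Σ V₁ᵀ`
    (U : Matrix (Fin m) (Fin m) ℝ) (σ : Fin m → ℝ)
    (V₁ : Matrix (Fin d) (Fin m) ℝ)
    (hU : Uᵀ * U = 1) (hV : V₁ᵀ * V₁ = 1)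
    (hSVD : Aᵀ = U * Matrix.diagonal σ * V₁ᵀ)
    (P : Matrix (Fin d) (Fin d) ℝ) (hP : P = V₁ * V₁ᵀ)
    (S : Matrix (Fin m) (Fin m) ℝ)
    (hS : S = Matrix.of fun i j => 1 / (σ i ^ 2 + σ j ^ 2 + lam))
    (Z₁ : Matrix (Fin m) (Fin m) ℝ)
    (hZ₁ : Z₁ = Matrix.of fun i j =>
      S i j * ((V₁ᵀ * (A * Dᵀ + D * Aᵀ + lam • Zref) * V₁) i j))
    (Z₂ : Matrix (Fin m) (Fin d) ℝ)
    (hZ₂ : Z₂ = (Matrix.diagonal (fun i => σ i ^ 2) + lam • 1)⁻¹ *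
      (V₁ᵀ * (A * Dᵀ + lam • Zref) * (1 - P)))
    (Zs : Matrix (Fin d) (Fin d) ℝ)
    (hZs : Zs = V₁ * Z₁ * V₁ᵀ + V₁ * Z₂ + Z₂ᵀ * V₁ᵀ + (1 - P) * Zref * (1 - P)) :
    Zs.IsSymm ∧
      (∀ Z : Matrix (Fin d) (Fin d) ℝ, Z.IsSymm →
        frobSq (Zs * A - D) + lam / 2 * frobSq (Zs - Zref) ≤
          frobSq (Z * A - D) + lam / 2 * frobSq (Z - Zref)) ∧
      (∀ Z : Matrix (Fin d) (Fin d) ℝ, Z.IsSymm →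
        frobSq (Z * A - D) + lam / 2 * frobSq (Z - Zref) =
          frobSq (Zs * A - D) + lam / 2 * frobSq (Zs - Zref) → Z = Zs) := by
  subst hP
  rw [show A * Dᵀ + D * Aᵀ + lam • Zref = stationaryRhs A D lam Zref from rfl] at hZ₁
  set C := stationaryRhs A D lam Zref
  have hQ := isSymm_one_sub_mul_transpose V₁
  have hQA := one_sub_mul_eq_zero_of_transpose_eq_svd hV hSVD
  have hCsymm : C.IsSymm := isSymm_stationaryRhs A D lam hZref
  have hZ₁symm : Z₁.IsSymm := by
    rw [hZ₁, hS]
    simpa using (hCsymm.mul_mul_transpose_s6 V₁ᵀ).diagonal_solve (fun i => σ i ^ 2) lam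
  have hsym : Zs.IsSymm := hZs ▸ isSymm_blockSum V₁ hZ₁symm Z₂ hZref
  have hstat : lyapunovMap (A * Aᵀ) lam Zs = C := by
    rw [mul_transpose_eq_of_transpose_eq_svd hU hSVD, hZs]
    refine lyapunovMap_blockSum hV (isSymm_diagonal _) hCsymm ?_ ?_ ?_
      (mul_stationaryRhs_mul_self_of_mul_eq_zero hQ hQA D lam Zref).symm
    · rw [hZ₁, hS]
      simpa using lyapunovMap_diagonal_solve (fun i j => by positivity) (V₁ᵀ * C * V₁)
    · rw [hZ₂, mul_nonsing_inv_cancel_left _ _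
        (isUnit_det_diagonal_add_smul_one (s := fun i => σ i ^ 2) fun i => by positivity),
        mul_stationaryRhs_mul_of_mul_eq_zero hQ hQA]
    · rw [hZ₂, Matrix.mul_assoc, Matrix.mul_assoc, one_sub_mul_transpose_mul_self hV,
        Matrix.mul_zero, Matrix.mul_zero]
  exact ⟨hsym, fun Z hZ => objective_le_of_stationary hlam.le hZref hsym hstat hZ,
    fun Z hZ h => eq_of_objective_eq_of_stationary hlam hZref hsym hstat hZ h⟩

theorem regularized_symmetric_procrustes_solution (d m : ℕ)
    (A D : Matrix (Fin d) (Fin m) ℝ) (hm : m ≤ d)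
    (lam : ℝ) (hlam : 0 < lam)
    (Zref : Matrix (Fin d) (Fin d) ℝ) (hZref : Zref.IsSymm)
    -- economic SVD of Aᵀ : `Aᵀ = U Σ V₁ᵀ`
    (U : Matrix (Fin m) (Fin m) ℝ) (σ : Fin m → ℝ)
    (V₁ : Matrix (Fin d) (Fin m) ℝ)
    (hU : Uᵀ * U = 1) (hV : V₁ᵀ * V₁ = 1) (hσ : ∀ i, 0 ≤ σ i)
    (hSVD : Aᵀ = U * Matrix.diagonal σ * V₁ᵀ)
    (P : Matrix (Fin d) (Fin d) ℝ) (hP : P = V₁ * V₁ᵀ)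
    (S : Matrix (Fin m) (Fin m) ℝ)
    (hS : S = Matrix.of fun i j => 1 / (σ i ^ 2 + σ j ^ 2 + lam))
    (Z₁ : Matrix (Fin m) (Fin m) ℝ)
    (hZ₁ : Z₁ = Matrix.of fun i j =>
      S i j * ((V₁ᵀ * (A * Dᵀ + D * Aᵀ + lam • Zref) * V₁) i j))
    (Z₂ : Matrix (Fin m) (Fin d) ℝ)
    (hZ₂ : Z₂ = (Matrix.diagonal (fun i => σ i ^ 2) + lam • 1)⁻¹ *
      (V₁ᵀ * (A * Dᵀ + lam • Zref) * (1 - P)))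
    (Zs : Matrix (Fin d) (Fin d) ℝ)
    (hZs : Zs = V₁ * Z₁ * V₁ᵀ + V₁ * Z₂ + Z₂ᵀ * V₁ᵀ + (1 - P) * Zref * (1 - P)) :
    Zs.IsSymm ∧
      (∀ Z : Matrix (Fin d) (Fin d) ℝ, Z.IsSymm →
        frobSq (Zs * A - D) + lam / 2 * frobSq (Zs - Zref) ≤
          frobSq (Z * A - D) + lam / 2 * frobSq (Z - Zref)) ∧
      (∀ Z : Matrix (Fin d) (Fin d) ℝ, Z.IsSymm →
        frobSq (Z * A - D) + lam / 2 * frobSq (Z - Zref) =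
          frobSq (Zs * A - D) + lam / 2 * frobSq (Zs - Zref) → Z = Zs) :=
  regularized_symmetric_procrustes_solution_general d m A D lam hlam Zref hZref U σ V₁ hU hV hSVD P
    hP S hS Z₁ hZ₁ Z₂ hZ₂ Zs hZs
end

section
/- For λ > 0, the problem of minimizing ‖ΣZ₁ − D₁‖_F² + λ‖Z₁ − R₁‖_F² over symmetric m×m matrices Z₁, where Σ = diag(σ₁,…,σ_m) with σ_i ≥ 0 and R₁ is symmetric, has the unique solution whose (i,j) entry is (σ_i(D₁)_{ij} + σ_j(D₁)_{ji} + 2λ(R₁)_{ij})/(σ_i² + σ_j² + 2λ). -/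
open Matrix

/-!
For symmetric `Z` the two entries `Z i j = Z j i` are one variable, so pairing the `(i, j)` and
`(j, i)` terms writes twice the objective as `∑ i j, q i j (Z i j)` with each `q i j` a
one-variable quadratic with leading coefficient `σ i ^ 2 + σ j ^ 2 + 2 λ > 0`. Completing the
square in every `q i j` shows that twice the objective exceeds its value at the proposed solution
by `∑ i j, (σ i ^ 2 + σ j ^ 2 + 2 λ) (Z i j - Zsol i j) ^ 2`.
-/

lemma sq_sub_add_sq_sub_add_two_mul_sq_sub_eq {s s' d d' r lam : ℝ}
    (hc : s ^ 2 + s' ^ 2 + 2 * lam ≠ 0) (t : ℝ) :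
    let c := s ^ 2 + s' ^ 2 + 2 * lam
    let x := (s * d + s' * d' + 2 * lam * r) / c
    (s * t - d) ^ 2 + (s' * t - d') ^ 2 + 2 * lam * (t - r) ^ 2 =
      (s * x - d) ^ 2 + (s' * x - d') ^ 2 + 2 * lam * (x - r) ^ 2 + c * (t - x) ^ 2 := by
  intro c x
  have hx : x * c = s * d + s' * d' + 2 * lam * r := div_mul_cancel₀ _ hc
  linear_combination 2 * (t - x) * hx

lemma Matrix.eq_of_sum_sum_mul_sq_sub_eq_zero {n : Type*} [Fintype n] {w : n → n → ℝ}
    (hw : ∀ i j, 0 < w i j) {A B : Matrix n n ℝ}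
    (h : ∑ i, ∑ j, w i j * (A i j - B i j) ^ 2 = 0) : A = B := by
  have hterm : ∀ i j, 0 ≤ w i j * (A i j - B i j) ^ 2 := fun i j =>
    mul_nonneg (hw i j).le (sq_nonneg _)
  ext i j
  rw [Fintype.sum_eq_zero_iff_of_nonneg (fun i => Finset.sum_nonneg fun j _ => hterm i j)] at h
  have hij := congr_fun ((Fintype.sum_eq_zero_iff_of_nonneg (hterm i)).mp (congr_fun h i)) j
  simpa [(hw i j).ne', sub_eq_zero] using hij

section RegularizedLeastSquares

variable {n : Type*} (σ : n → ℝ) (D R : Matrix n n ℝ) (lam : ℝ)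

noncomputable def regSolution : Matrix n n ℝ :=
  of fun i j => (σ i * D i j + σ j * D j i + 2 * lam * R i j) / (σ i ^ 2 + σ j ^ 2 + 2 * lam)

lemma regSolution_isSymm {R : Matrix n n ℝ} (hR : R.IsSymm) :
    (regSolution σ D R lam).IsSymm := by
  ext i j
  simp only [regSolution, transpose_apply, of_apply, hR.apply i j]
  ring

variable [Fintype n] [DecidableEq n]

def regObjective (Z : Matrix n n ℝ) : ℝ :=
  frobSq (diagonal σ * Z - D) + lam * frobSq (Z - R)

variable {σ D R lam}

lemma two_mul_regObjective_of_isSymm {Z : Matrix n n ℝ} (hZ : Z.IsSymm) :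
    2 * regObjective σ D R lam Z = ∑ i, ∑ j, ((σ i * Z i j - D i j) ^ 2 +
      (σ j * Z i j - D j i) ^ 2 + 2 * lam * (Z i j - R i j) ^ 2) := by
  have hswap :
      ∑ i, ∑ j, (σ j * Z i j - D j i) ^ 2 = ∑ i, ∑ j, (σ i * Z i j - D i j) ^ 2 := by
    rw [Finset.sum_comm]
    simp only [hZ.apply]
  simp only [regObjective, frobSq, Matrix.sub_apply, diagonal_mul, Finset.sum_add_distrib,
    ← Finset.mul_sum, hswap]
  ring

lemma two_mul_regObjective_eq_add (hR : R.IsSymm) (hlam : 0 < lam) {Z : Matrix n n ℝ}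
    (hZ : Z.IsSymm) :
    2 * regObjective σ D R lam Z = 2 * regObjective σ D R lam (regSolution σ D R lam) +
      ∑ i, ∑ j, (σ i ^ 2 + σ j ^ 2 + 2 * lam) * (Z i j - regSolution σ D R lam i j) ^ 2 := by
  rw [two_mul_regObjective_of_isSymm hZ,
    two_mul_regObjective_of_isSymm (regSolution_isSymm _ _ _ hR), ← Finset.sum_add_distrib]
  refine Finset.sum_congr rfl fun i _ => ?_
  rw [← Finset.sum_add_distrib]
  refine Finset.sum_congr rfl fun j _ => ?_
  exact sq_sub_add_sq_sub_add_two_mul_sq_sub_eq (by positivity) (Z i j)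

end RegularizedLeastSquares

theorem diagonal_regularized_symmetric_lsq_general (m : ℕ)
    (σ : Fin m → ℝ)
    (D₁ R₁ : Matrix (Fin m) (Fin m) ℝ) (hR : R₁.IsSymm)
    (lam : ℝ) (hlam : 0 < lam)
    (Zsol : Matrix (Fin m) (Fin m) ℝ)
    (hZsol : Zsol = Matrix.of fun i j =>
      (σ i * D₁ i j + σ j * D₁ j i + 2 * lam * R₁ i j) /
        (σ i ^ 2 + σ j ^ 2 + 2 * lam)) :
    Zsol.IsSymm ∧
      (∀ Z : Matrix (Fin m) (Fin m) ℝ, Z.IsSymm →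
        frobSq (Matrix.diagonal σ * Zsol - D₁) + lam * frobSq (Zsol - R₁) ≤
          frobSq (Matrix.diagonal σ * Z - D₁) + lam * frobSq (Z - R₁)) ∧
      (∀ Z : Matrix (Fin m) (Fin m) ℝ, Z.IsSymm →
        frobSq (Matrix.diagonal σ * Z - D₁) + lam * frobSq (Z - R₁) =
          frobSq (Matrix.diagonal σ * Zsol - D₁) + lam * frobSq (Zsol - R₁) →
        Z = Zsol) := by
  change Zsol = regSolution σ D₁ R₁ lam at hZsol
  subst hZsol
  have hweight : ∀ i j, 0 < σ i ^ 2 + σ j ^ 2 + 2 * lam := fun i j => by positivity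
  refine ⟨regSolution_isSymm σ D₁ lam hR, fun Z hZ => ?_, fun Z hZ hEq => ?_⟩
  · show regObjective σ D₁ R₁ lam _ ≤ regObjective σ D₁ R₁ lam Z
    have hnonneg : 0 ≤ ∑ i, ∑ j, (σ i ^ 2 + σ j ^ 2 + 2 * lam) *
        (Z i j - regSolution σ D₁ R₁ lam i j) ^ 2 :=
      Finset.sum_nonneg fun i _ => Finset.sum_nonneg fun j _ =>
        mul_nonneg (hweight i j).le (sq_nonneg _)
    linarith [two_mul_regObjective_eq_add (σ := σ) (D := D₁) hR hlam hZ]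
  · change regObjective σ D₁ R₁ lam Z = regObjective σ D₁ R₁ lam _ at hEq
    refine Matrix.eq_of_sum_sum_mul_sq_sub_eq_zero hweight ?_
    linarith [two_mul_regObjective_eq_add (σ := σ) (D := D₁) hR hlam hZ]

theorem diagonal_regularized_symmetric_lsq (m : ℕ)
    (σ : Fin m → ℝ) (hσ : ∀ i, 0 ≤ σ i)
    (D₁ R₁ : Matrix (Fin m) (Fin m) ℝ) (hR : R₁.IsSymm)
    (lam : ℝ) (hlam : 0 < lam)
    (Zsol : Matrix (Fin m) (Fin m) ℝ)
    (hZsol : Zsol = Matrix.of fun i j =>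
      (σ i * D₁ i j + σ j * D₁ j i + 2 * lam * R₁ i j) /
        (σ i ^ 2 + σ j ^ 2 + 2 * lam)) :
    Zsol.IsSymm ∧
      (∀ Z : Matrix (Fin m) (Fin m) ℝ, Z.IsSymm →
        frobSq (Matrix.diagonal σ * Zsol - D₁) + lam * frobSq (Zsol - R₁) ≤
          frobSq (Matrix.diagonal σ * Z - D₁) + lam * frobSq (Z - R₁)) ∧
      (∀ Z : Matrix (Fin m) (Fin m) ℝ, Z.IsSymm →
        frobSq (Matrix.diagonal σ * Z - D₁) + lam * frobSq (Z - R₁) =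
          frobSq (Matrix.diagonal σ * Zsol - D₁) + lam * frobSq (Zsol - R₁) →
        Z = Zsol) :=
  diagonal_regularized_symmetric_lsq_general m σ D₁ R₁ hR lam hlam Zsol hZsol
end

section
/- Let Z_λ and Z₀ be the solutions of the regularized symmetric Procrustes problem min_{Z=Zᵀ} ‖ZA − D‖_F² + (λ/2)‖Z − Z_ref‖_F² for parameter λ > 0 and for the limit λ → 0 respectively. Then ‖Z_λ − Z₀‖_F ≤ 5λ‖Z₀ − Z_ref‖_F / (σ_min²(A) + λ), where σ_min(A) is the smallest nonzero singular value of A. -/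
/-!
Put `E = Z_λ - Z₀`. Moving `Z_λ` or `Z₀` along a symmetric `S` with `S A = 0` does not change
`Z A`, so the first-order conditions make `Z_λ - Z_ref` and `Z₀ - Z_ref`, hence `E`,
Frobenius-orthogonal to all such `S`. Testing with `S = u vᵀ + v uᵀ` for `u, v ∈ ker Aᵀ` shows
that `E` vanishes on `ker Aᵀ × ker Aᵀ`. In an orthonormal eigenbasis of `A Aᵀ` every nonzero
entry of `E` therefore sits in a row or a column belonging to a nonzero eigenvalue `μ ≥ σ²`,
and by symmetry of `E` this gives `σ² ‖E‖² ≤ 2 ‖E A‖²`.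

Comparing the regularized objective at `Z_λ` and at the midpoint `(Z_λ + Z₀) / 2` with the
parallelogram law, and using that `Z₀` minimizes the data term, gives
`‖E A‖² / 2 + 3λ/4 ‖E‖² ≤ λ ‖Z₀ - Z_ref‖ ‖E‖`. Together,
`‖E‖ ≤ 4λ ‖Z₀ - Z_ref‖ / (σ² + 3λ) ≤ 5λ ‖Z₀ - Z_ref‖ / (σ² + λ)`.
-/

open Matrix

open RealInnerProductSpace

theorem real_inner_eq_zero_of_forall_norm_sq_le_norm_add_smul_sq {E : Type*}
    [NormedAddCommGroup E] [InnerProductSpace ℝ E] {u v : E}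
    (h : ∀ t : ℝ, ‖u‖ ^ 2 ≤ ‖u + t • v‖ ^ 2) : ⟪u, v⟫ = 0 := by
  have key : ∀ t : ℝ, 0 ≤ t * (2 * ⟪u, v⟫ + t * ‖v‖ ^ 2) := fun t => by
    have := h t
    rw [norm_add_sq_real, inner_smul_right, norm_smul, mul_pow, Real.norm_eq_abs, sq_abs] at this
    linarith
  have h1 := key (-⟪u, v⟫ / (‖v‖ ^ 2 + 1))
  have hpos : 0 < ‖v‖ ^ 2 + 1 := by positivity
  rw [div_mul_eq_mul_div, ← sub_nonneg] at h1
  field_simp at h1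
  nlinarith [sq_nonneg ⟪u, v⟫, sq_nonneg (‖v‖)]

namespace Tikhonov

variable {M E F : Type*} [AddCommGroup M] [Module ℝ M]
  [NormedAddCommGroup E] [InnerProductSpace ℝ E] [NormedAddCommGroup F] [InnerProductSpace ℝ F]
  {K : Submodule ℝ M} {P : M →ₗ[ℝ] E} {L : M →ₗ[ℝ] F} {b : F} {r : E} {lam : ℝ} {x y : M}

theorem inner_eq_zero_of_isMinOn_fiber (hx : x ∈ K)
    (hmin : IsMinOn (fun z => ‖P z - r‖ ^ 2) {z | z ∈ K ∧ L z = L x} x)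
    {s : M} (hs : s ∈ K) (hLs : L s = 0) : ⟪P x - r, P s⟫ = 0 :=
  real_inner_eq_zero_of_forall_norm_sq_le_norm_add_smul_sq fun t => by
    simpa [sub_add_eq_add_sub, hLs] using
      isMinOn_iff.mp hmin (x + t • s) ⟨K.add_mem hx (K.smul_mem t hs), by simp [hLs]⟩

theorem isMinOn_fiber_of_isMinOn (hlam : 0 < lam)
    (hx : IsMinOn (fun z => ‖L z - b‖ ^ 2 + lam / 2 * ‖P z - r‖ ^ 2) K x) :
    IsMinOn (fun z => ‖P z - r‖ ^ 2) {z | z ∈ K ∧ L z = L x} x :=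
  isMinOn_iff.mpr fun z ⟨hz, hLz⟩ => by
    have := isMinOn_iff.mp hx z hz
    rw [hLz] at this
    exact le_of_mul_le_mul_left (by linarith) (half_pos hlam)

theorem inner_map_sub_eq_zero (hlam : 0 < lam) (hx : x ∈ K) (hy : y ∈ K)
    (hxmin : IsMinOn (fun z => ‖L z - b‖ ^ 2 + lam / 2 * ‖P z - r‖ ^ 2) K x)
    (hyfib : IsMinOn (fun z => ‖P z - r‖ ^ 2) {z | z ∈ K ∧ L z = L y} y)
    {s : M} (hs : s ∈ K) (hLs : L s = 0) : ⟪P (x - y), P s⟫ = 0 := by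
  rw [show P (x - y) = (P x - r) - (P y - r) by simp, inner_sub_left,
    inner_eq_zero_of_isMinOn_fiber hx (isMinOn_fiber_of_isMinOn hlam hxmin) hs hLs,
    inner_eq_zero_of_isMinOn_fiber hy hyfib hs hLs, sub_zero]

theorem norm_sq_map_sub_le (hlam : 0 ≤ lam) (hx : x ∈ K) (hy : y ∈ K)
    (hxmin : IsMinOn (fun z => ‖L z - b‖ ^ 2 + lam / 2 * ‖P z - r‖ ^ 2) K x)
    (hymin : ‖L y - b‖ ^ 2 ≤ ‖L x - b‖ ^ 2) :
    ‖L (x - y)‖ ^ 2 / 2 + 3 * lam / 4 * ‖P (x - y)‖ ^ 2 ≤ lam * ‖P y - r‖ * ‖P (x - y)‖ := by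
  have hmid := isMinOn_iff.mp hxmin ((1 / 2 : ℝ) • (x + y)) (K.smul_mem _ (K.add_mem hx hy))
  have hL : L ((1 / 2 : ℝ) • (x + y)) - b = (1 / 2 : ℝ) • ((L x - b) + (L y - b)) := by
    simp only [map_smul, map_add]; module
  have hP : P ((1 / 2 : ℝ) • (x + y)) - r = (1 / 2 : ℝ) • ((P x - r) + (P y - r)) := by
    simp only [map_smul, map_add]; module
  rw [hL, hP, norm_smul, norm_smul, mul_pow, mul_pow] at hmid
  have hpL : ‖(L x - b) + (L y - b)‖ ^ 2 + ‖L (x - y)‖ ^ 2 =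
      2 * (‖L x - b‖ ^ 2 + ‖L y - b‖ ^ 2) := by
    rw [map_sub, ← sub_sub_sub_cancel_right (L x) (L y) b]
    exact parallelogram_law_with_norm ℝ _ _
  have hpP : ‖(P x - r) + (P y - r)‖ ^ 2 + ‖P (x - y)‖ ^ 2 =
      2 * (‖P x - r‖ ^ 2 + ‖P y - r‖ ^ 2) := by
    rw [map_sub, ← sub_sub_sub_cancel_right (P x) (P y) r]
    exact parallelogram_law_with_norm ℝ _ _
  have hPx : ‖P x - r‖ ^ 2 = ‖P y - r‖ ^ 2 + 2 * ⟪P y - r, P (x - y)⟫ + ‖P (x - y)‖ ^ 2 := by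
    rw [← norm_add_sq_real, map_sub, sub_add_sub_cancel']
  have hcs : -⟪P y - r, P (x - y)⟫ ≤ ‖P y - r‖ * ‖P (x - y)‖ := by
    simpa only [inner_neg_left, norm_neg] using real_inner_le_norm (-(P y - r)) (P (x - y))
  norm_num at hmid
  linear_combination 2 * hmid + hymin + hpL / 2 + lam / 4 * hpP - lam / 2 * hPx +
    mul_le_mul_of_nonneg_left hcs hlam

theorem norm_map_sub_le (hlam : 0 < lam) {s : ℝ} (hs : 0 ≤ s)
    (hgap : ∀ e ∈ K, (∀ t ∈ K, L t = 0 → ⟪P e, P t⟫ = 0) → s * ‖P e‖ ^ 2 ≤ 2 * ‖L e‖ ^ 2)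
    (hx : x ∈ K) (hy : y ∈ K)
    (hxmin : IsMinOn (fun z => ‖L z - b‖ ^ 2 + lam / 2 * ‖P z - r‖ ^ 2) K x)
    (hymin : IsMinOn (fun z => ‖L z - b‖ ^ 2) K y)
    (hyfib : IsMinOn (fun z => ‖P z - r‖ ^ 2) {z | z ∈ K ∧ L z = L y} y) :
    ‖P (x - y)‖ ≤ 4 * lam * ‖P y - r‖ / (s + 3 * lam) := by
  have hsub := hgap (x - y) (K.sub_mem hx hy) fun t ht hLt =>
    inner_map_sub_eq_zero hlam hx hy hxmin hyfib ht hLt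
  have hest := norm_sq_map_sub_le hlam.le hx hy hxmin (isMinOn_iff.mp hymin x hx)
  rcases (norm_nonneg (P (x - y))).eq_or_lt with h0 | hpos
  · rw [← h0]
    positivity
  · rw [le_div_iff₀ (by positivity)]
    refine le_of_mul_le_mul_right ?_ hpos
    nlinarith

end Tikhonov

namespace Matrix

variable {k l : Type*} [Fintype k] [Fintype l]

def frobeniusVec : Matrix k l ℝ →ₗ[ℝ] EuclideanSpace ℝ (k × l) where
  toFun X := WithLp.toLp 2 fun p => X p.1 p.2
  map_add' _ _ := rfl
  map_smul' _ _ := rfl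

omit [Fintype k] [Fintype l] in
@[simp]
theorem frobeniusVec_apply (X : Matrix k l ℝ) (p : k × l) : frobeniusVec X p = X p.1 p.2 := rfl

theorem inner_frobeniusVec_vecMulVec (X : Matrix k l ℝ) (u : k → ℝ) (v : l → ℝ) :
    ⟪frobeniusVec X, frobeniusVec (vecMulVec u v)⟫ = u ⬝ᵥ X *ᵥ v := by
  simp only [PiLp.inner_apply, frobeniusVec_apply, vecMulVec_apply, RCLike.inner_apply,
    Real.ringHom_apply, Fintype.sum_prod_type, dotProduct, mulVec, Finset.mul_sum]
  exact Finset.sum_congr rfl fun i _ => Finset.sum_congr rfl fun j _ => by ring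

theorem norm_frobeniusVec_sq (X : Matrix k l ℝ) : ‖frobeniusVec X‖ ^ 2 = frobSq X := by
  simp [EuclideanSpace.norm_sq_eq, frobSq, Fintype.sum_prod_type]

theorem norm_frobeniusVec (X : Matrix k l ℝ) : ‖frobeniusVec X‖ = √(frobSq X) := by
  rw [← norm_frobeniusVec_sq, Real.sqrt_sq (norm_nonneg _)]

theorem norm_frobeniusVec_sub_sq (X Y : Matrix k l ℝ) :
    ‖frobeniusVec X - frobeniusVec Y‖ ^ 2 = frobSq (X - Y) := by
  rw [← map_sub, norm_frobeniusVec_sq]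

omit [Fintype k] in
theorem mem_selfAdjoint_submodule_iff_isSymm {Z : Matrix k k ℝ} :
    Z ∈ selfAdjoint.submodule ℝ (Matrix k k ℝ) ↔ Z.IsSymm := by
  change star Z = Z ↔ Zᵀ = Z
  rw [star_eq_conjTranspose, conjTranspose_eq_transpose_of_trivial]

omit [Fintype l] in
theorem dotProduct_mulVec_eq_zero_of_forall_inner {A : Matrix k l ℝ} {E : Matrix k k ℝ}
    (hE : E.IsSymm)
    (horth : ∀ S : Matrix k k ℝ, S.IsSymm → S * A = 0 → ⟪frobeniusVec E, frobeniusVec S⟫ = 0)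
    {u v : k → ℝ} (hu : u ᵥ* A = 0) (hv : v ᵥ* A = 0) : u ⬝ᵥ E *ᵥ v = 0 := by
  have hS : (vecMulVec u v + vecMulVec v u).IsSymm := by
    rw [IsSymm, transpose_add, transpose_vecMulVec, transpose_vecMulVec, add_comm]
  have hSA : (vecMulVec u v + vecMulVec v u) * A = 0 := by
    rw [Matrix.add_mul, vecMulVec_mul, vecMulVec_mul, hu, hv]
    ext
    simp [vecMulVec_apply]
  have h := horth _ hS hSA
  rw [map_add, inner_add_right, inner_frobeniusVec_vecMulVec, inner_frobeniusVec_vecMulVec] at h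
  have hswap : v ⬝ᵥ E *ᵥ u = u ⬝ᵥ E *ᵥ v := by
    rw [dotProduct_mulVec, ← mulVec_transpose, hE.eq, dotProduct_comm]
  linarith

theorem frobSq_eq_trace (X : Matrix k l ℝ) : frobSq X = trace (X * Xᵀ) := by
  simp [frobSq, trace, mul_apply, sq]

theorem trace_mul_diagonal_mul_transpose [DecidableEq l] (Y : Matrix k l ℝ) (μ : l → ℝ) :
    trace (Y * diagonal μ * Yᵀ) = ∑ i, ∑ j, μ j * Y i j ^ 2 := by
  simp only [trace, diag, mul_apply, diagonal_apply, transpose_apply, mul_ite, mul_zero,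
    Finset.sum_ite_eq', Finset.mem_univ, if_true]
  exact Finset.sum_congr rfl fun i _ => Finset.sum_congr rfl fun j _ => by ring

variable [DecidableEq k] {U : Matrix k k ℝ}

theorem trace_transpose_mul_mul (hU : U * Uᵀ = 1) (M : Matrix k k ℝ) :
    trace (Uᵀ * M * U) = trace M := by
  rw [trace_mul_cycle, hU, one_mul]

theorem frobSq_transpose_mul_mul (hU : U * Uᵀ = 1) (X : Matrix k k ℝ) :
    frobSq (Uᵀ * X * U) = frobSq X := by
  rw [frobSq_eq_trace, frobSq_eq_trace, ← trace_transpose_mul_mul hU (X * Xᵀ)]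
  simp only [transpose_mul, transpose_transpose, mul_assoc]
  rw [← mul_assoc U, hU, one_mul]

theorem frobSq_mul_eq_sum (hU : U * Uᵀ = 1) {μ : k → ℝ} {A : Matrix k l ℝ}
    (hA : A * Aᵀ = U * diagonal μ * Uᵀ) (X : Matrix k k ℝ) :
    frobSq (X * A) = ∑ i, ∑ j, μ j * (Uᵀ * X * U) i j ^ 2 := by
  rw [← trace_mul_diagonal_mul_transpose, frobSq_eq_trace, ← trace_transpose_mul_mul hU]
  simp only [transpose_mul, transpose_transpose, Matrix.mul_assoc]
  rw [← Matrix.mul_assoc A, hA]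
  simp only [Matrix.mul_assoc]

theorem hasEigenvalue_mulVecLin_mul_of_mulVec_eq {n m K : Type*} [Fintype n] [Fintype m]
    [Field K] {A : Matrix n m K} {B : Matrix m n K} {μ : K} {v : n → K}
    (hv : (A * B) *ᵥ v = μ • v) (hv0 : v ≠ 0) (hμ : μ ≠ 0) :
    Module.End.HasEigenvalue (mulVecLin (B * A)) μ := by
  rw [← mulVec_mulVec] at hv
  have hw : (B * A) *ᵥ (B *ᵥ v) = μ • (B *ᵥ v) := by
    rw [← mulVec_mulVec, hv, mulVec_smul]
  have hw0 : B *ᵥ v ≠ 0 := fun h => by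
    rw [h, mulVec_zero] at hv
    exact smul_ne_zero hμ hv0 hv.symm
  exact Module.End.hasEigenvalue_of_hasEigenvector
    ⟨Module.End.mem_eigenspace_iff.mpr hw, hw0⟩

theorem mul_frobSq_le_two_mul_frobSq_mul_of_diagonalization (hU : U * Uᵀ = 1) {μ : k → ℝ}
    {A : Matrix k l ℝ} (hA : A * Aᵀ = U * diagonal μ * Uᵀ) {E : Matrix k k ℝ} (hE : E.IsSymm)
    {s : ℝ} (hs : 0 ≤ s) (hμ : ∀ i, μ i ≠ 0 → s ≤ μ i)
    (hzero : ∀ i j, μ i = 0 → μ j = 0 → (Uᵀ * E * U) i j = 0) :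
    s * frobSq E ≤ 2 * frobSq (E * A) := by
  set Y := Uᵀ * E * U with hYdef
  have hY : ∀ i j, Y j i = Y i j := fun i j => by
    rw [← transpose_apply Y, show Yᵀ = Y by simp [Y, transpose_mul, hE.eq, Matrix.mul_assoc]]
  have hpoint : ∀ i j, s * Y i j ^ 2 ≤ μ i * Y i j ^ 2 + μ j * Y i j ^ 2 := fun i j => by
    have hY2 := sq_nonneg (Y i j)
    by_cases hi : μ i = 0 <;> by_cases hj : μ j = 0
    · simp [hzero i j hi hj]
    · nlinarith [hμ j hj]
    · nlinarith [hμ i hi]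
    · nlinarith [hμ i hi, hμ j hj]
  calc s * frobSq E = ∑ i, ∑ j, s * Y i j ^ 2 := by
        rw [← frobSq_transpose_mul_mul hU, ← hYdef, frobSq, Finset.mul_sum]
        simp only [Finset.mul_sum]
    _ ≤ ∑ i, ∑ j, (μ i * Y i j ^ 2 + μ j * Y i j ^ 2) :=
        Finset.sum_le_sum fun i _ => Finset.sum_le_sum fun j _ => hpoint i j
    _ = 2 * frobSq (E * A) := by
        rw [frobSq_mul_eq_sum hU hA, ← hYdef, two_mul]
        simp only [Finset.sum_add_distrib]
        rw [Finset.sum_comm]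
        simp only [hY]

theorem mul_frobSq_le_two_mul_frobSq_mul (A : Matrix k l ℝ) {E : Matrix k k ℝ} (hE : E.IsSymm)
    {s : ℝ} (hs : 0 ≤ s)
    (hgap : ∀ μ, μ ≠ 0 → Module.End.HasEigenvalue (mulVecLin (Aᵀ * A)) μ → s ≤ μ)
    (horth : ∀ S : Matrix k k ℝ, S.IsSymm → S * A = 0 → ⟪frobeniusVec E, frobeniusVec S⟫ = 0) :
    s * frobSq E ≤ 2 * frobSq (E * A) := by
  have hAH : Aᴴ = Aᵀ := conjTranspose_eq_transpose_of_trivial A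
  have hB : (A * Aᵀ).IsHermitian := hAH ▸ isHermitian_mul_conjTranspose_self A
  set U : Matrix k k ℝ := (hB.eigenvectorUnitary : Matrix k k ℝ) with hUdef
  have hUT : star U = Uᵀ := by rw [star_eq_conjTranspose, conjTranspose_eq_transpose_of_trivial]
  have hU : U * Uᵀ = 1 := hUT ▸ mem_unitaryGroup_iff.mp hB.eigenvectorUnitary.2
  have hdiag : A * Aᵀ = U * diagonal hB.eigenvalues * Uᵀ := by
    have h := hB.spectral_theorem
    rwa [Unitary.conjStarAlgAut_apply, RCLike.ofReal_real_eq_id, Function.id_comp, ← hUdef,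
      hUT] at h
  have heig : ∀ j, (A * Aᵀ) *ᵥ Uᵀ j = hB.eigenvalues j • Uᵀ j := fun j =>
    hB.mulVec_eigenvectorBasis j
  have hvec0 : ∀ j, Uᵀ j ≠ 0 := fun j =>
    (WithLp.ofLp_eq_zero 2).ne.2 (hB.eigenvectorBasis.orthonormal.ne_zero j)
  have hker' : ∀ j, hB.eigenvalues j = 0 → Uᵀ j ᵥ* A = 0 := fun j hj => by
    rw [← vecMul_self_mul_conjTranspose_eq_zero, hAH, ← mulVec_transpose, transpose_mul,
      transpose_transpose, heig j, hj, zero_smul]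
  refine mul_frobSq_le_two_mul_frobSq_mul_of_diagonalization hU hdiag hE hs
    (fun i hi => hgap _ hi (hasEigenvalue_mulVecLin_mul_of_mulVec_eq (heig i) (hvec0 i) hi))
    (fun i j hi hj => ?_)
  rw [mul_mul_apply]
  exact dotProduct_mulVec_eq_zero_of_forall_inner hE horth (hker' i hi) (hker' j hj)

end Matrix

theorem regularization_bias_bound_general (d m : ℕ)
    (A D : Matrix (Fin d) (Fin m) ℝ)
    (Zref : Matrix (Fin d) (Fin d) ℝ)
    (lam : ℝ) (hlam : 0 < lam)
    -- `Zlam` is the solution of the regularized symmetric Procrustes problem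
    (Zlam : Matrix (Fin d) (Fin d) ℝ) (hZlams : Zlam.IsSymm)
    (hZlam : ∀ Z : Matrix (Fin d) (Fin d) ℝ, Z.IsSymm →
      frobSq (Zlam * A - D) + lam / 2 * frobSq (Zlam - Zref) ≤
        frobSq (Z * A - D) + lam / 2 * frobSq (Z - Zref))
    -- `Z₀` is the λ → 0 solution: it minimizes ‖ZA − D‖²_F over symmetric Z,
    -- and among those minimizers it minimizes ‖Z − Z_ref‖_F
    (Z₀ : Matrix (Fin d) (Fin d) ℝ) (hZ₀s : Z₀.IsSymm)
    (hZ₀min : ∀ Z : Matrix (Fin d) (Fin d) ℝ, Z.IsSymm →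
      frobSq (Z₀ * A - D) ≤ frobSq (Z * A - D))
    (hZ₀reg : ∀ Z : Matrix (Fin d) (Fin d) ℝ, Z.IsSymm →
      frobSq (Z * A - D) = frobSq (Z₀ * A - D) →
      frobSq (Z₀ - Zref) ≤ frobSq (Z - Zref))
    -- `σmin` is the smallest nonzero singular value of `A`
    (σmin : ℝ)
    (hσmin : ∀ μ : ℝ, μ ≠ 0 →
      Module.End.HasEigenvalue (Matrix.mulVecLin (Aᵀ * A)) μ → σmin ^ 2 ≤ μ) :
    Real.sqrt (frobSq (Zlam - Z₀)) ≤
      5 * lam * Real.sqrt (frobSq (Z₀ - Zref)) / (σmin ^ 2 + lam) := by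
  set K := selfAdjoint.submodule ℝ (Matrix (Fin d) (Fin d) ℝ)
  set L := frobeniusVec ∘ₗ mulRightLinearMap (Fin d) ℝ A
  have hL : ∀ Z, L Z = frobeniusVec (Z * A) := fun _ => rfl
  have hK : ∀ {Z}, Z ∈ K ↔ Z.IsSymm := mem_selfAdjoint_submodule_iff_isSymm
  have hbound := Tikhonov.norm_map_sub_le (K := K) (P := frobeniusVec) (L := L)
    (b := frobeniusVec D) (r := frobeniusVec Zref) hlam (sq_nonneg σmin)
    (fun Z hZ horth => by
      simpa only [hL, norm_frobeniusVec_sq] using mul_frobSq_le_two_mul_frobSq_mul A (hK.1 hZ)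
        (sq_nonneg σmin) hσmin fun S hS hSA => horth S (hK.2 hS) (by rw [hL, hSA, map_zero]))
    (hK.2 hZlams) (hK.2 hZ₀s)
    (isMinOn_iff.mpr fun Z hZ => by
      simpa only [hL, norm_frobeniusVec_sub_sq] using hZlam Z (hK.1 hZ))
    (isMinOn_iff.mpr fun Z hZ => by
      simpa only [hL, norm_frobeniusVec_sub_sq] using hZ₀min Z (hK.1 hZ))
    (isMinOn_iff.mpr fun Z ⟨hZ, hLZ⟩ => by
      simpa only [norm_frobeniusVec_sub_sq] using hZ₀reg Z (hK.1 hZ) (by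
        rw [← norm_frobeniusVec_sub_sq, ← norm_frobeniusVec_sub_sq, ← hL, ← hL, hLZ]))
  rw [← norm_frobeniusVec, ← norm_frobeniusVec, map_sub, map_sub]
  refine hbound.trans ?_
  have ha := norm_nonneg (frobeniusVec Z₀ - frobeniusVec Zref)
  rw [div_le_div_iff₀ (by positivity) (by positivity)]
  nlinarith [mul_nonneg (mul_nonneg hlam.le ha) (sq_nonneg σmin),
    mul_nonneg (mul_nonneg hlam.le ha) hlam.le]

theorem regularization_bias_bound (d m : ℕ) (hm : m ≤ d)
    (A D : Matrix (Fin d) (Fin m) ℝ)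
    (Zref : Matrix (Fin d) (Fin d) ℝ) (hZref : Zref.IsSymm)
    (lam : ℝ) (hlam : 0 < lam)
    -- `Zlam` is the solution of the regularized symmetric Procrustes problem
    (Zlam : Matrix (Fin d) (Fin d) ℝ) (hZlams : Zlam.IsSymm)
    (hZlam : ∀ Z : Matrix (Fin d) (Fin d) ℝ, Z.IsSymm →
      frobSq (Zlam * A - D) + lam / 2 * frobSq (Zlam - Zref) ≤
        frobSq (Z * A - D) + lam / 2 * frobSq (Z - Zref))
    -- `Z₀` is the λ → 0 solution: it minimizes ‖ZA − D‖²_F over symmetric Z,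
    -- and among those minimizers it minimizes ‖Z − Z_ref‖_F
    (Z₀ : Matrix (Fin d) (Fin d) ℝ) (hZ₀s : Z₀.IsSymm)
    (hZ₀min : ∀ Z : Matrix (Fin d) (Fin d) ℝ, Z.IsSymm →
      frobSq (Z₀ * A - D) ≤ frobSq (Z * A - D))
    (hZ₀reg : ∀ Z : Matrix (Fin d) (Fin d) ℝ, Z.IsSymm →
      frobSq (Z * A - D) = frobSq (Z₀ * A - D) →
      frobSq (Z₀ - Zref) ≤ frobSq (Z - Zref))
    -- `σmin` is the smallest nonzero singular value of `A`
    (σmin : ℝ) (hσpos : 0 < σmin)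
    (hσeig : Module.End.HasEigenvalue (Matrix.mulVecLin (Aᵀ * A)) (σmin ^ 2))
    (hσmin : ∀ μ : ℝ, μ ≠ 0 →
      Module.End.HasEigenvalue (Matrix.mulVecLin (Aᵀ * A)) μ → σmin ^ 2 ≤ μ) :
    Real.sqrt (frobSq (Zlam - Z₀)) ≤
      5 * lam * Real.sqrt (frobSq (Z₀ - Zref)) / (σmin ^ 2 + lam) :=
  regularization_bias_bound_general d m A D Zref lam hlam Zlam hZlams hZlam Z₀ hZ₀s hZ₀min hZ₀reg
    σmin hσmin
end
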